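/- The class of all kernel-cokernel pairs in the category LCA of locally compact Hausdorff abelian groups (pairs G₁ → G₂ → G₃ with G₁ → G₂ a closed embedding and G₂ → G₃ inducing a topological isomorphism G₂/G₁ ≅ G₃) forms an exact structure on LCA; in particular LCA is a quasi-abelian/exact category. -/

import Mathlib

open Topology Function

universe u

section
variable {A B : Type u} [CommGroup A] [TopologicalSpace A] [CommGroup B] [TopologicalSpace B]

/-- `A` is an object of LCA: a locally compact Hausdorff abelian topological group. -/
def IsLCAGroup (A : Type u) [CommGroup A] [TopologicalSpace A] : Prop :=
  IsTopologicalGroup A ∧ LocallyCompactSpace A ∧ T2Space A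

/-- Admissible monics in LCA: continuous homomorphisms that are closed embeddings. -/
def AdmMonic (f : A →* B) : Prop :=
  IsClosedEmbedding ⇑f

/-- Admissible epics in LCA: continuous surjective open homomorphisms (equivalently, those
inducing a topological isomorphism of the quotient by the kernel onto the target). -/
def AdmEpic (f : A →* B) : Prop :=
  Continuous f ∧ Surjective f ∧ IsOpenMap f

end

/-- The kernel-cokernel pairs of LCA: `i` is a closed embedding, `p` is a continuous open
surjection, and the range of `i` is the kernel of `p`. -/
def KerCokerPair {A B C : Type u} [CommGroup A] [TopologicalSpace A] [CommGroup B]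
    [TopologicalSpace B] [CommGroup C] [TopologicalSpace C] (i : A →* B) (p : B →* C) : Prop :=
  AdmMonic i ∧ AdmEpic p ∧ ∀ b : B, p b = 1 ↔ b ∈ Set.range i

/-!
Both constructions are the ones from abelian groups. The pullback of `p` and `f` is the closed
subgroup `{(a, c) | p a = f c}` of `A × C`; its projection to `C` is surjective and open because
`p` is. The pushout of `i` and `f` is `(B × C) ⧸ N` with `N = {(i a, (f a)⁻¹)}`, which is closed
as the image of a closed set under the closed embedding `i × id`, so the quotient is again LCA.
The map `C → (B × C) ⧸ N` is a closed embedding: the saturation of `{1} × C` is the closed set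
`range i × C`, and an open `U ⊆ C` is the preimage of the image in the quotient of any open `W`
with `(i × id)⁻¹ W = {(a, c) | c * f a ∈ U}`.
-/

open Set

section Pullback

variable {A B C : Type*} [Group A] [Group B] [Group C] (p : A →* B) (f : C →* B)

def pullbackSubgroup : Subgroup (A × C) :=
  (p.comp (.fst A C)).eqLocus (f.comp (.snd A C))

namespace pullbackSubgroup

def fst : pullbackSubgroup p f →* A := (MonoidHom.fst A C).comp (pullbackSubgroup p f).subtype

def snd : pullbackSubgroup p f →* C := (MonoidHom.snd A C).comp (pullbackSubgroup p f).subtype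

theorem condition : p.comp (fst p f) = f.comp (snd p f) :=
  MonoidHom.ext fun x ↦ x.2

variable {p f}

theorem snd_surjective (hp : Surjective p) : Surjective (snd p f) := fun c ↦
  let ⟨a, ha⟩ := hp (f c)
  ⟨⟨(a, c), ha⟩, rfl⟩

variable {Z : Type*} [Group Z]

def lift (u : Z →* A) (v : Z →* C) (h : p.comp u = f.comp v) : Z →* pullbackSubgroup p f :=
  (u.prod v).codRestrict _ fun z ↦ DFunLike.congr_fun h z

theorem hom_ext {w w' : Z →* pullbackSubgroup p f} (h₁ : (fst p f).comp w = (fst p f).comp w')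
    (h₂ : (snd p f).comp w = (snd p f).comp w') : w = w' :=
  MonoidHom.ext fun z ↦ Subtype.ext <| Prod.ext (DFunLike.congr_fun h₁ z) (DFunLike.congr_fun h₂ z)

variable [TopologicalSpace A] [TopologicalSpace C]

theorem continuous_fst : Continuous (fst p f) :=
  _root_.continuous_fst.comp continuous_subtype_val

theorem continuous_snd : Continuous (snd p f) :=
  _root_.continuous_snd.comp continuous_subtype_val

theorem existsUnique_continuous_lift [TopologicalSpace Z] {u : Z →* A} {v : Z →* C}
    (hu : Continuous u) (hv : Continuous v) (h : p.comp u = f.comp v) :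
    ∃! w : Z →* pullbackSubgroup p f, Continuous w ∧ (fst p f).comp w = u ∧ (snd p f).comp w = v :=
  ⟨lift u v h, ⟨(hu.prodMk hv).subtype_mk _, rfl, rfl⟩,
    fun _ ⟨_, h₁, h₂⟩ ↦ hom_ext h₁ h₂⟩

variable [TopologicalSpace B]

theorem isOpenMap_snd (hp : IsOpenMap p) (hf : Continuous f) : IsOpenMap (snd p f) := by
  intro O hO
  obtain ⟨W, hW, rfl⟩ := isOpen_induced_iff.mp hO
  rw [isOpen_iff_forall_mem_open]
  rintro _ ⟨x, hxW, rfl⟩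
  obtain ⟨U, V, hU, hV, hxU, hxV, hUV⟩ := isOpen_prod_iff.mp hW x.1.1 x.1.2 hxW
  refine ⟨f ⁻¹' (p '' U) ∩ V, ?_, ((hp U hU).preimage hf).inter hV, ⟨⟨x.1.1, hxU, x.2⟩, hxV⟩⟩
  rintro c ⟨⟨a, haU, hac⟩, hcV⟩
  exact ⟨⟨(a, c), hac⟩, hUV ⟨haU, hcV⟩, rfl⟩

end pullbackSubgroup

theorem isClosed_pullbackSubgroup [TopologicalSpace A] [TopologicalSpace B] [TopologicalSpace C]
    [T2Space B] {p : A →* B} {f : C →* B} (hp : Continuous p) (hf : Continuous f) :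
    IsClosed (pullbackSubgroup p f : Set (A × C)) :=
  isClosed_eq (hp.comp continuous_fst) (hf.comp continuous_snd)

end Pullback

section Pushout

variable {A B C : Type*} [CommGroup A] [CommGroup B] [CommGroup C] (i : A →* B) (f : A →* C)

/-- The relations `(i a, 1) ~ (1, f a)` defining the pushout of `i` and `f`. -/
def pushoutRel : Subgroup (B × C) := (i.prod f⁻¹).range

theorem coe_pushoutRel :
    (pushoutRel i f : Set (B × C)) = Prod.map i id '' {x : A × C | f x.1 * x.2 = 1} := by
  ext x
  constructor
  · rintro ⟨a, rfl⟩
    exact ⟨(a, (f a)⁻¹), mul_inv_cancel _, rfl⟩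
  · rintro ⟨⟨a, c⟩, h, rfl⟩
    exact ⟨a, Prod.ext rfl (inv_eq_of_mul_eq_one_right h)⟩

abbrev PushoutGroup : Type _ := (B × C) ⧸ pushoutRel i f

namespace PushoutGroup

def inl : B →* PushoutGroup i f := (QuotientGroup.mk' _).comp (.inl B C)

def inr : C →* PushoutGroup i f := (QuotientGroup.mk' _).comp (.inr B C)

theorem condition : (inr i f).comp f = (inl i f).comp i :=
  MonoidHom.ext fun a ↦ QuotientGroup.eq.mpr ⟨a, by simp⟩

variable {i f}

theorem mk_eq_inr_iff {x : B × C} {c : C} :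
    (x : PushoutGroup i f) = inr i f c ↔ ∃ a, x = (i a, c * (f a)⁻¹) := by
  rw [eq_comm, inr, MonoidHom.coe_comp, comp_apply, QuotientGroup.mk'_apply, QuotientGroup.eq]
  refine exists_congr fun a ↦ ?_
  simp [Prod.ext_iff, eq_comm (a := x.1), eq_inv_mul_iff_mul_eq, eq_comm (a := x.2)]

theorem inr_injective (hi : Injective i) : Injective (inr i f) := by
  refine (injective_iff_map_eq_one _).mpr fun c hc ↦ ?_
  obtain ⟨a, ha⟩ := (mk_eq_inr_iff (i := i) (f := f) (x := 1)).mp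
    (by rw [QuotientGroup.mk_one, hc])
  obtain ⟨hia, hfa⟩ := Prod.ext_iff.mp ha
  obtain rfl : a = 1 := hi (by simpa using hia.symm)
  simpa [eq_comm] using hfa

theorem preimage_mk_range_inr :
    ((↑) : B × C → PushoutGroup i f) ⁻¹' range (inr i f) = range i ×ˢ univ := by
  ext x
  simp only [mem_preimage, mem_range, eq_comm (b := (x : PushoutGroup i f)), mk_eq_inr_iff]
  constructor
  · rintro ⟨c, a, rfl⟩
    exact ⟨⟨a, rfl⟩, trivial⟩
  · rintro ⟨⟨a, ha⟩, -⟩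
    exact ⟨x.2 * f a, a, by simp [ha]⟩

variable {Z : Type*} [CommGroup Z]

def desc (u : B →* Z) (v : C →* Z) (h : u.comp i = v.comp f) : PushoutGroup i f →* Z :=
  QuotientGroup.lift _ (u.coprod v) <| by
    rintro _ ⟨a, rfl⟩
    simpa [mul_inv_eq_one] using DFunLike.congr_fun h a

theorem desc_comp_inl (u : B →* Z) (v : C →* Z) (h : u.comp i = v.comp f) :
    (desc u v h).comp (inl i f) = u :=
  MonoidHom.ext fun b ↦ by simp [desc, inl]

theorem desc_comp_inr (u : B →* Z) (v : C →* Z) (h : u.comp i = v.comp f) :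
    (desc u v h).comp (inr i f) = v :=
  MonoidHom.ext fun c ↦ by simp [desc, inr]

theorem hom_ext {w w' : PushoutGroup i f →* Z} (h₁ : w.comp (inl i f) = w'.comp (inl i f))
    (h₂ : w.comp (inr i f) = w'.comp (inr i f)) : w = w' := by
  refine QuotientGroup.monoidHom_ext _ ?_
  rw [← MonoidHom.coprod_unique (w.comp _), ← MonoidHom.coprod_unique (w'.comp _)]
  exact congrArg₂ MonoidHom.coprod h₁ h₂

variable [TopologicalSpace B] [TopologicalSpace C]

theorem continuous_inl : Continuous (inl i f) :=
  QuotientGroup.continuous_mk.comp (continuous_id.prodMk continuous_const)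

theorem continuous_inr : Continuous (inr i f) :=
  QuotientGroup.continuous_mk.comp (continuous_const.prodMk continuous_id)

theorem existsUnique_continuous_desc [TopologicalSpace Z] [ContinuousMul Z] {u : B →* Z}
    {v : C →* Z} (hu : Continuous u) (hv : Continuous v) (h : u.comp i = v.comp f) :
    ∃! w : PushoutGroup i f →* Z, Continuous w ∧ w.comp (inl i f) = u ∧ w.comp (inr i f) = v :=
  ⟨desc u v h, ⟨(QuotientGroup.isQuotientMap_mk _).continuous_iff.mpr
      ((hu.comp continuous_fst).mul (hv.comp continuous_snd)), desc_comp_inl u v h,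
      desc_comp_inr u v h⟩,
    fun _ ⟨_, h₁, h₂⟩ ↦
      hom_ext (h₁.trans (desc_comp_inl u v h).symm) (h₂.trans (desc_comp_inr u v h).symm)⟩

variable [TopologicalSpace A]

theorem isInducing_inr [ContinuousMul B] [ContinuousMul C] (hi : IsEmbedding i)
    (hf : Continuous f) : IsInducing (inr i f) := by
  refine ⟨le_antisymm (continuous_iff_le_induced.mp continuous_inr) fun U hU ↦ ?_⟩
  have hS : IsOpen {x : A × C | x.2 * f x.1 ∈ U} :=
    hU.preimage (continuous_snd.mul (hf.comp continuous_fst))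
  obtain ⟨W, hW, hWS⟩ := (hi.prodMap .id).isOpen_iff.mp hS
  refine isOpen_induced_iff.mpr ⟨(↑) '' W, QuotientGroup.isOpenMap_coe W hW, ?_⟩
  ext c
  simp only [mem_preimage, mem_image, mk_eq_inr_iff]
  constructor
  · rintro ⟨_, hxW, a, rfl⟩
    have : (a, c * (f a)⁻¹) ∈ Prod.map i id ⁻¹' W := hxW
    simpa [hWS] using this
  · intro hc
    have : ((1 : A), c) ∈ Prod.map i id ⁻¹' W := by simpa [hWS] using hc
    exact ⟨_, this, 1, by simp⟩

theorem isClosedEmbedding_inr [ContinuousMul B] [ContinuousMul C]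
    (hi : IsClosedEmbedding i) (hf : Continuous f) : IsClosedEmbedding (inr i f) := by
  refine ⟨⟨isInducing_inr hi.isEmbedding hf, inr_injective hi.injective⟩, ?_⟩
  rw [← (QuotientGroup.isQuotientMap_mk _).isClosed_preimage, preimage_mk_range_inr]
  exact hi.isClosed_range.prod isClosed_univ

end PushoutGroup

theorem isClosed_pushoutRel [TopologicalSpace A] [TopologicalSpace B] [TopologicalSpace C]
    [ContinuousMul C] [T2Space C] {i : A →* B} {f : A →* C} (hi : IsClosedEmbedding i)
    (hf : Continuous f) : IsClosed (pushoutRel i f : Set (B × C)) := by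
  rw [coe_pushoutRel]
  exact (hi.prodMap .id).isClosedMap _
    (isClosed_eq ((hf.comp continuous_fst).mul continuous_snd) continuous_const)

end Pushout

namespace IsLCAGroup

variable {A B C : Type u} [CommGroup A] [TopologicalSpace A] [CommGroup B] [TopologicalSpace B]
  [CommGroup C] [TopologicalSpace C]

theorem pullbackSubgroup [T2Space B] (hA : IsLCAGroup A) (hC : IsLCAGroup C) {p : A →* B}
    {f : C →* B} (hp : Continuous p) (hf : Continuous f) : IsLCAGroup (pullbackSubgroup p f) := by
  obtain ⟨_, _, _⟩ := hA
  obtain ⟨_, _, _⟩ := hC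
  have := (isClosed_pullbackSubgroup hp hf).locallyCompactSpace
  exact ⟨inferInstance, inferInstance, inferInstance⟩

theorem pushoutGroup (hB : IsLCAGroup B) (hC : IsLCAGroup C) {i : A →* B} {f : A →* C}
    (hi : IsClosedEmbedding i) (hf : Continuous f) : IsLCAGroup (PushoutGroup i f) := by
  obtain ⟨_, _, _⟩ := hB
  obtain ⟨_, _, _⟩ := hC
  have := isClosed_pushoutRel hi hf
  exact ⟨inferInstance, inferInstance, inferInstance⟩

end IsLCAGroup

/-- The class of all kernel-cokernel pairs in the category LCA of locally compact Hausdorff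
abelian groups is an exact structure on LCA:
(E1) identities are admissible monics and admissible epics;
(E2) admissible monics and admissible epics are closed under composition;
(E3) the pushout of an admissible monic along any morphism exists and is an admissible monic;
(E4) the pullback of an admissible epic along any morphism exists and is an admissible epic. -/
theorem stmt16 :
    -- E1
    (∀ (A : Type u) (_ : CommGroup A) (_ : TopologicalSpace A), IsLCAGroup A →
      AdmMonic (MonoidHom.id A) ∧ AdmEpic (MonoidHom.id A)) ∧
    -- E2
    (∀ (A B C : Type u) (_ : CommGroup A) (_ : TopologicalSpace A) (_ : CommGroup B)
        (_ : TopologicalSpace B) (_ : CommGroup C) (_ : TopologicalSpace C),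
      IsLCAGroup A → IsLCAGroup B → IsLCAGroup C →
      ∀ (f : A →* B) (g : B →* C),
        (AdmMonic f → AdmMonic g → AdmMonic (g.comp f)) ∧
        (AdmEpic f → AdmEpic g → AdmEpic (g.comp f))) ∧
    -- E3: pushouts of admissible monics exist and are admissible monics
    (∀ (A B C : Type u) (_ : CommGroup A) (_ : TopologicalSpace A) (_ : CommGroup B)
        (_ : TopologicalSpace B) (_ : CommGroup C) (_ : TopologicalSpace C),
      IsLCAGroup A → IsLCAGroup B → IsLCAGroup C →
      ∀ (i : A →* B) (f : A →* C), AdmMonic i → Continuous f →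
        ∃ (D : Type u) (_ : CommGroup D) (_ : TopologicalSpace D), IsLCAGroup D ∧
          ∃ (i' : C →* D) (f' : B →* D),
            AdmMonic i' ∧ Continuous f' ∧ i'.comp f = f'.comp i ∧
            ∀ (Z : Type u) (_ : CommGroup Z) (_ : TopologicalSpace Z), IsLCAGroup Z →
              ∀ (u : B →* Z) (v : C →* Z), Continuous u → Continuous v →
                u.comp i = v.comp f →
                ∃! w : D →* Z, Continuous w ∧ w.comp f' = u ∧ w.comp i' = v) ∧
    -- E4: pullbacks of admissible epics exist and are admissible epics
    (∀ (A B C : Type u) (_ : CommGroup A) (_ : TopologicalSpace A) (_ : CommGroup B)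
        (_ : TopologicalSpace B) (_ : CommGroup C) (_ : TopologicalSpace C),
      IsLCAGroup A → IsLCAGroup B → IsLCAGroup C →
      ∀ (p : A →* B) (f : C →* B), AdmEpic p → Continuous f →
        ∃ (D : Type u) (_ : CommGroup D) (_ : TopologicalSpace D), IsLCAGroup D ∧
          ∃ (p' : D →* C) (f' : D →* A),
            AdmEpic p' ∧ Continuous f' ∧ p.comp f' = f.comp p' ∧
            ∀ (Z : Type u) (_ : CommGroup Z) (_ : TopologicalSpace Z), IsLCAGroup Z →
              ∀ (u : Z →* A) (v : Z →* C), Continuous u → Continuous v →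
                p.comp u = f.comp v →
                ∃! w : Z →* D, Continuous w ∧ f'.comp w = u ∧ p'.comp w = v) := by
  refine ⟨?_, ?_, ?_, ?_⟩
  · exact fun _ _ _ _ ↦ ⟨.id, continuous_id, surjective_id, .id⟩
  · exact fun _ _ _ _ _ _ _ _ _ _ _ _ f g ↦ ⟨fun hf hg ↦ hg.comp hf,
      fun hf hg ↦ ⟨hg.1.comp hf.1, hg.2.1.comp hf.2.1, hg.2.2.comp hf.2.2⟩⟩
  · intro A B C _ _ _ _ _ _ _ hB hC i f hi hf
    have := hB.1; have := hC.1
    exact ⟨PushoutGroup i f, _, _, hB.pushoutGroup hC hi hf, PushoutGroup.inr i f,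
      PushoutGroup.inl i f, PushoutGroup.isClosedEmbedding_inr hi hf, PushoutGroup.continuous_inl,
      PushoutGroup.condition i f, fun Z _ _ hZ u v hu hv h ↦
        have := hZ.1
        PushoutGroup.existsUnique_continuous_desc hu hv h⟩
  · intro A B C _ _ _ _ _ _ hA hB hC p f hp hf
    have := hB.2.2
    exact ⟨pullbackSubgroup p f, _, _, hA.pullbackSubgroup hC hp.1 hf, pullbackSubgroup.snd p f,
      pullbackSubgroup.fst p f,
      ⟨pullbackSubgroup.continuous_snd, pullbackSubgroup.snd_surjective hp.2.1,
        pullbackSubgroup.isOpenMap_snd hp.2.2 hf⟩,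
      pullbackSubgroup.continuous_fst, pullbackSubgroup.condition p f,
      fun _ _ _ _ _ _ hu hv h ↦ pullbackSubgroup.existsUnique_continuous_lift hu hv h⟩
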